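/- arXiv:1708.06785 — 3 statements merged into one kernel-verified Lean document; each statement's English description precedes it below -/
import Mathlib

section
/- In the discrete-time dual risk model with delay r ∈ ℕ⁺ and initial capital 0, the finite-time Parisian survival probability at horizon r + 4 equals φ*_r(0, r+4) = 1 − [1 + 2·p_0·p_2 + p_1·(1 + p_1)] · p_0 · φ(1, r+1), where φ(1, r+1) is the finite-time survival probability of the compound binomial risk process started at 1 over horizon r + 1. -/
open MeasureTheory ProbabilityTheory

noncomputable section

variable {Ω : Type*} [MeasurableSpace Ω]

/-- The reserve process of the discrete-time dual risk model with initial capital `u`: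
`R*_n = u - n + ∑_{i=1}^n Y_i`. -/
def reserve (Y : ℕ → Ω → ℕ) (u : ℤ) (n : ℕ) (ω : Ω) : ℤ :=
  u - n + ∑ i ∈ Finset.range n, (Y i ω : ℤ)

/-- The probability mass function of the gain size distribution: `p_k = P(Y_1 = k)`. -/
def gainPMF (μ : Measure Ω) (Y : ℕ → Ω → ℕ) (k : ℕ) : ℝ :=
  (μ {ω | Y 0 ω = k}).toReal

/-- The `n`-fold convolution of the gain size pmf: `p^{*n}_k = P(Y_1 + ⋯ + Y_n = k)`
(with `p^{*0}_k = 1` iff `k = 0`, automatically, since the empty sum is `0`). -/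
def conv (μ : Measure Ω) (Y : ℕ → Ω → ℕ) (n k : ℕ) : ℝ :=
  (μ {ω | ∑ i ∈ Finset.range n, Y i ω = k}).toReal

/-- The gains `(Y_i)` are i.i.d. (and measurable). -/
def IsIID (μ : Measure Ω) (Y : ℕ → Ω → ℕ) : Prop :=
  (∀ i, Measurable (Y i)) ∧
    iIndepFun Y μ ∧ ∀ i, IdentDistrib (Y i) (Y 0) μ μ

/-- Net profit condition: `μ = E[Y_1] > 1` (in particular the mean is finite). -/
def NetProfit (μ : Measure Ω) (Y : ℕ → Ω → ℕ) : Prop :=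
  Integrable (fun ω => (Y 0 ω : ℝ)) μ ∧ 1 < ∫ ω, (Y 0 ω : ℝ) ∂μ

/-- Parisian ruin with delay `r` happens, with the deficit window starting with a
down-crossing (from level `0` to level `-1`) at time `s`: the reserve stays strictly
negative throughout the `r + 1` consecutive periods `s, s+1, …, s+r`. -/
def parisianWindow (Y : ℕ → Ω → ℕ) (u : ℤ) (r s : ℕ) (ω : Ω) : Prop :=
  1 ≤ s ∧ reserve Y u (s - 1) ω = 0 ∧ reserve Y u s ω = -1 ∧
    ∀ m, s ≤ m → m ≤ s + r → reserve Y u m ω < 0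

/-- Finite-time Parisian ruin probability `ψ*_r(u,t) = P_u(τ^r < t)`:
the Parisian ruin time `τ^r = s + r` exceeds some down-crossing time `s` by `r`. -/
def parisianRuinBy (μ : Measure Ω) (Y : ℕ → Ω → ℕ) (u : ℤ) (r t : ℕ) : ℝ :=
  (μ {ω | ∃ s, parisianWindow Y u r s ω ∧ s + r < t}).toReal

/-- Infinite-time Parisian ruin probability `ψ*_r(u) = P_u(τ^r < ∞)`. -/
def parisianRuin (μ : Measure Ω) (Y : ℕ → Ω → ℕ) (u : ℤ) (r : ℕ) : ℝ :=
  (μ {ω | ∃ s, parisianWindow Y u r s ω}).toReal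

/-- Infinite-time dual ruin probability `ψ*(u) = P_u(τ* < ∞)`, where
`τ* = inf{n : R*_n = 0}`. -/
def dualRuinProb (μ : Measure Ω) (Y : ℕ → Ω → ℕ) (u : ℤ) : ℝ :=
  (μ {ω | ∃ n, reserve Y u n ω = 0}).toReal

/-- The event `{τ* = n}` for the dual risk model started at `u`:
the reserve first hits level `0` exactly at time `n`. -/
def dualRuinAt (Y : ℕ → Ω → ℕ) (u : ℤ) (n : ℕ) : Set Ω :=
  {ω | reserve Y u n ω = 0 ∧ ∀ m < n, reserve Y u m ω ≠ 0}

/-- The event `{τ⁻ = n, R*_{τ⁻} = k}` for the process started at `-1`: the recovery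
(first return to a non-negative level) happens at time `n` with level `k` at recovery. -/
def recoveryAt (Y : ℕ → Ω → ℕ) (n k : ℕ) : Set Ω :=
  {ω | reserve Y (-1) n ω = (k : ℤ) ∧ ∀ s < n, reserve Y (-1) s ω < 0}

/-- `P_{-1}(τ⁻ ≤ r, R*_{τ⁻} = k)`: starting from `-1`, recovery happens within `r`
periods, with level `k` at recovery. -/
def recoveryWithinProb (μ : Measure Ω) (Y : ℕ → Ω → ℕ) (r k : ℕ) : ℝ :=
  (μ {ω | ∃ n, 1 ≤ n ∧ n ≤ r ∧ reserve Y (-1) n ω = (k : ℤ) ∧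
      ∀ s < n, reserve Y (-1) s ω < 0}).toReal

/-- Finite-time survival probability `φ(v,t)` of the compound binomial risk process
`R_n = v + n - ∑_{i=1}^n Y_i`. -/
def classicalSurvival (μ : Measure Ω) (Y : ℕ → Ω → ℕ) (v : ℕ) (t : ℕ) : ℝ :=
  (μ {ω | ∀ n < t, 0 < (v : ℤ) + n - ∑ i ∈ Finset.range n, (Y i ω : ℤ)}).toReal

/-! A Parisian ruin before time `r + 4` starts with a down-crossing at some `s ∈ {1, 2, 3}`, and
since `r ≥ 1` no two of these windows can occur together. Started from capital `0`, a window at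
`s + 1` means `Y_0 + ⋯ + Y_{s-1} = s`, `Y_s = 0`, and `Y_{s+1} + ⋯ + Y_{s+n} ≤ n` for all `n ≤ r`;
the last condition is survival of the compound binomial process started at `1` up to time `r`.
The three conditions concern disjoint blocks of the i.i.d. gains, so the window has probability
`p^{*s}_s · p_0 · φ(1, r+1)`, and `p^{*0}_0 + p^{*1}_1 + p^{*2}_2 = 1 + p_1 + 2 p_0 p_2 + p_1²`. -/

open Finset

section Block

variable {β : Type*}

def block (Y : ℕ → Ω → β) (a N : ℕ) (ω : Ω) : Fin N → β := fun i => Y (a + i) ω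

def appendSet {M N : ℕ} (A : Set (Fin M → β)) (B : Set (Fin N → β)) : Set (Fin (M + N) → β) :=
  {c | (fun i => c (Fin.castAdd N i)) ∈ A ∧ (fun i => c (Fin.natAdd M i)) ∈ B}

omit [MeasurableSpace Ω] in
theorem block_preimage_appendSet (Y : ℕ → Ω → β) (a : ℕ) {M N : ℕ} (A : Set (Fin M → β))
    (B : Set (Fin N → β)) :
    block Y a (M + N) ⁻¹' appendSet A B = block Y a M ⁻¹' A ∩ block Y (a + M) N ⁻¹' B := by
  ext ω
  have hB : (fun i : Fin N => block Y a (M + N) ω (Fin.natAdd M i)) = block Y (a + M) N ω :=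
    funext fun i => by simp [block, add_assoc]
  change _ ∧ _ ↔ _
  rw [hB]
  rfl

omit [MeasurableSpace Ω] in
theorem block_preimage_sum_eq [AddCommMonoid β] (Y : ℕ → Ω → β) (a n : ℕ) (k : β) :
    block Y a n ⁻¹' {c | ∑ i, c i = k} = {ω | ∑ i ∈ range n, Y (a + i) ω = k} := by
  ext ω
  simp only [block, Set.mem_preimage, Set.mem_ofPred_eq,
    Fin.sum_univ_eq_sum_range (fun i => Y (a + i) ω)]

omit [MeasurableSpace Ω] in
theorem block_one_preimage (Y : ℕ → Ω → β) (a : ℕ) (b : β) :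
    block Y a 1 ⁻¹' {c | c 0 = b} = {ω | Y a ω = b} := by
  ext ω
  simp [block]

variable [MeasurableSpace β]

theorem measurable_block {Y : ℕ → Ω → β} (hY : ∀ i, Measurable (Y i)) (a N : ℕ) :
    Measurable (block Y a N) :=
  measurable_pi_lambda _ fun _ => hY _

theorem MeasurableSet.appendSet {M N : ℕ} {A : Set (Fin M → β)} {B : Set (Fin N → β)}
    (hA : MeasurableSet A) (hB : MeasurableSet B) : MeasurableSet (appendSet A B) :=
  ((measurable_pi_lambda _ fun _ => measurable_pi_apply _) hA).inter
    ((measurable_pi_lambda _ fun _ => measurable_pi_apply _) hB)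

theorem Measure.pi_appendSet {M N : ℕ} (ν : Measure β) [SigmaFinite ν] (A : Set (Fin M → β))
    (B : Set (Fin N → β)) :
    Measure.pi (fun _ => ν) (appendSet A B)
      = Measure.pi (fun _ => ν) A * Measure.pi (fun _ => ν) B := by
  let e := (MeasurableEquiv.piCongrLeft (fun _ => β) finSumFinEquiv).symm.trans
    (MeasurableEquiv.sumPiEquivProdPi fun _ : Fin M ⊕ Fin N => β)
  have he : MeasurePreserving e (Measure.pi fun _ => ν)
      ((Measure.pi fun _ => ν).prod (Measure.pi fun _ => ν)) :=
    ((measurePreserving_piCongrLeft (fun _ => ν) finSumFinEquiv).symm _).trans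
      (measurePreserving_sumPiEquivProdPi _)
  have hset : appendSet A B = e ⁻¹' (A ×ˢ B) := by
    ext c
    simp [appendSet, e, MeasurableEquiv.piCongrLeft, Equiv.piCongrLeft,
      MeasurableEquiv.coe_sumPiEquivProdPi, Equiv.sumPiEquivProdPi, Equiv.piCongrLeft']
  rw [hset, he.measure_preimage_equiv, Measure.prod_prod]

variable {μ : Measure Ω} {Y : ℕ → Ω → β}

theorem map_block (hind : iIndepFun Y μ) (hid : ∀ i, IdentDistrib (Y i) (Y 0) μ μ) (a N : ℕ) :
    μ.map (block Y a N) = Measure.pi fun _ => μ.map (Y 0) := by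
  have := hind.isProbabilityMeasure
  have hinj : Function.Injective fun i : Fin N => a + (i : ℕ) := fun i j h => by
    simpa [Fin.ext_iff] using h
  change μ.map (fun ω (i : Fin N) => Y (a + i) ω) = _
  rw [(hind.precomp hinj).map_fun_eq_pi_map fun i => (hid _).aemeasurable_fst]
  simp only [(hid _).map_eq]

theorem measure_block_preimage (hind : iIndepFun Y μ) (hid : ∀ i, IdentDistrib (Y i) (Y 0) μ μ)
    (a : ℕ) {N : ℕ} {A : Set (Fin N → β)} (hA : MeasurableSet A) :
    μ (block Y a N ⁻¹' A) = Measure.pi (fun _ => μ.map (Y 0)) A := by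
  rw [← map_block hind hid a N]
  exact (Measure.map_apply_of_aemeasurable
    (aemeasurable_pi_lambda _ fun _ => (hid _).aemeasurable_fst) hA).symm

theorem measure_block_inter_block (hind : iIndepFun Y μ)
    (hid : ∀ i, IdentDistrib (Y i) (Y 0) μ μ) (a : ℕ) {M N : ℕ} {A : Set (Fin M → β)}
    {B : Set (Fin N → β)} (hA : MeasurableSet A) (hB : MeasurableSet B) :
    μ (block Y a M ⁻¹' A ∩ block Y (a + M) N ⁻¹' B)
      = μ (block Y 0 M ⁻¹' A) * μ (block Y 0 N ⁻¹' B) := by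
  have := hind.isProbabilityMeasure
  have : IsProbabilityMeasure (μ.map (Y 0)) :=
    Measure.isProbabilityMeasure_map (hid 0).aemeasurable_fst
  rw [← block_preimage_appendSet, measure_block_preimage hind hid a (hA.appendSet hB),
    Measure.pi_appendSet, measure_block_preimage hind hid 0 hA,
    measure_block_preimage hind hid 0 hB]

end Block

def survivalSet (r : ℕ) : Set (Fin r → ℕ) :=
  {c | ∀ n (hn : n ≤ r), ∑ i : Fin n, c (Fin.castLE hn i) ≤ n}

omit [MeasurableSpace Ω] in
theorem block_preimage_survivalSet (Y : ℕ → Ω → ℕ) (a r : ℕ) :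
    block Y a r ⁻¹' survivalSet r = {ω | ∀ n ≤ r, ∑ i ∈ range n, Y (a + i) ω ≤ n} := by
  ext ω
  simp [survivalSet, block, Fin.sum_univ_eq_sum_range (fun i => Y (a + i) ω)]

omit [MeasurableSpace Ω] in
theorem reserve_add (Y : ℕ → Ω → ℕ) (u : ℤ) (m n : ℕ) (ω : Ω) :
    reserve Y u (m + n) ω = reserve Y u m ω - n + ∑ i ∈ range n, (Y (m + i) ω : ℤ) := by
  simp only [reserve, sum_range_add]
  push_cast
  ring

omit [MeasurableSpace Ω] in
theorem parisianWindow_succ_iff {Y : ℕ → Ω → ℕ} {u : ℤ} {r s : ℕ} {ω : Ω} :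
    parisianWindow Y u r (s + 1) ω ↔
      reserve Y u s ω = 0 ∧ Y s ω = 0 ∧ ∀ n ≤ r, ∑ i ∈ range n, Y (s + 1 + i) ω ≤ n := by
  have hstep : reserve Y u (s + 1) ω = reserve Y u s ω - 1 + Y s ω := by
    simpa using reserve_add Y u s 1 ω
  have hafter : ∀ n, reserve Y u (s + 1 + n) ω
      = reserve Y u (s + 1) ω - n + ((∑ i ∈ range n, Y (s + 1 + i) ω : ℕ) : ℤ) := by
    intro n
    rw [reserve_add, Nat.cast_sum]
  simp only [parisianWindow, Nat.add_sub_cancel, le_add_iff_nonneg_left, zero_le, true_and]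
  constructor
  · rintro ⟨h0, h1, hneg⟩
    refine ⟨h0, by omega, fun n hn => ?_⟩
    have := hneg (s + 1 + n) (by omega) (by omega)
    rw [hafter, h1] at this
    omega
  · rintro ⟨h0, hY, htail⟩
    have h1 : reserve Y u (s + 1) ω = -1 := by omega
    refine ⟨h0, h1, fun m hm hm' => ?_⟩
    obtain ⟨n, rfl⟩ := Nat.exists_eq_add_of_le hm
    have := htail n (by omega)
    rw [hafter, h1]
    omega

omit [MeasurableSpace Ω] in
theorem not_parisianWindow_of_lt_of_le {Y : ℕ → Ω → ℕ} {u : ℤ} {r s s' : ℕ} {ω : Ω}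
    (h : parisianWindow Y u r s ω) (hlt : s < s') (hle : s' ≤ s + r + 1) :
    ¬ parisianWindow Y u r s' ω := fun h' => by
  have hneg := h.2.2.2 (s' - 1) (by omega) (by omega)
  have hzero := h'.2.1
  omega

omit [MeasurableSpace Ω] in
theorem setOf_parisianWindow_zero_succ (Y : ℕ → Ω → ℕ) (r s : ℕ) :
    {ω | parisianWindow Y 0 r (s + 1) ω}
      = block Y 0 s ⁻¹' {c | ∑ i, c i = s}
        ∩ block Y s (1 + r) ⁻¹' appendSet {c | c 0 = 0} (survivalSet r) := by
  rw [block_preimage_appendSet, block_preimage_sum_eq, block_one_preimage,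
    block_preimage_survivalSet]
  ext ω
  simp only [Set.mem_inter_iff, Set.mem_ofPred_eq, parisianWindow_succ_iff, reserve, zero_add,
    ← Nat.cast_sum]
  refine and_congr ?_ Iff.rfl
  omega

variable {μ : Measure Ω} {Y : ℕ → Ω → ℕ}

theorem conv_zero [IsProbabilityMeasure μ] (k : ℕ) : conv μ Y 0 k = if k = 0 then 1 else 0 := by
  by_cases hk : k = 0 <;> simp [conv, hk, eq_comm]

theorem conv_eq_measureReal_block (n k : ℕ) :
    conv μ Y n k = μ.real (block Y 0 n ⁻¹' {c | ∑ i, c i = k}) := by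
  rw [block_preimage_sum_eq]
  simp [conv, measureReal_def]

theorem gainPMF_eq_measureReal_block (k : ℕ) :
    gainPMF μ Y k = μ.real (block Y 0 1 ⁻¹' {c | c 0 = k}) := by
  rw [block_one_preimage]
  rfl

theorem classicalSurvival_one_eq_measureReal_block (r : ℕ) :
    classicalSurvival μ Y 1 (r + 1) = μ.real (block Y 0 r ⁻¹' survivalSet r) := by
  rw [block_preimage_survivalSet, classicalSurvival, measureReal_def]
  congr 2
  ext ω
  simp only [Set.mem_ofPred_eq, zero_add, Nat.lt_succ_iff, ← Nat.cast_sum]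
  refine forall₂_congr fun n _ => ?_
  omega

theorem conv_succ (hY : IsIID μ Y) (n k : ℕ) :
    conv μ Y (n + 1) k = ∑ j ∈ range (k + 1), conv μ Y n j * gainPMF μ Y (k - j) := by
  obtain ⟨hmeas, hind, hid⟩ := hY
  have := hind.isProbabilityMeasure
  let piece j := block Y 0 n ⁻¹' {c | ∑ i, c i = j} ∩ block Y n 1 ⁻¹' {c | c 0 = k - j}
  have hevent : {ω | ∑ i ∈ range (n + 1), Y i ω = k} = ⋃ j ∈ range (k + 1), piece j := by
    ext ω
    simp only [piece, block_preimage_sum_eq, block_one_preimage, zero_add, sum_range_succ,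
      Set.mem_ofPred_eq, Set.mem_iUnion, Set.mem_inter_iff, mem_range, exists_prop]
    constructor
    · intro h
      exact ⟨_, by omega, rfl, by omega⟩
    · rintro ⟨j, hjk, hj, hYn⟩
      omega
  have hpiece : ∀ j, μ.real (piece j) = conv μ Y n j * gainPMF μ Y (k - j) := fun j => by
    rw [conv_eq_measureReal_block, gainPMF_eq_measureReal_block, measureReal_def,
      measureReal_def, measureReal_def, ← ENNReal.toReal_mul, ← measure_block_inter_block hind hid 0
        .of_discrete .of_discrete, zero_add]
  rw [conv, ← measureReal_def, hevent, measureReal_biUnion_finset]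
  · exact sum_congr rfl fun j _ => hpiece j
  · intro j _ j' _ hne
    refine Set.disjoint_left.2 fun ω hj hj' => hne ?_
    simp only [piece, Set.mem_inter_iff, block_preimage_sum_eq, Set.mem_ofPred_eq] at hj hj'
    exact hj.1.symm.trans hj'.1
  · exact fun j _ => (measurable_block hmeas 0 n .of_discrete).inter
      (measurable_block hmeas n 1 .of_discrete)

theorem measureReal_parisianWindow_zero_succ (hY : IsIID μ Y) (r s : ℕ) :
    μ.real {ω | parisianWindow Y 0 r (s + 1) ω}
      = conv μ Y s s * gainPMF μ Y 0 * classicalSurvival μ Y 1 (r + 1) := by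
  obtain ⟨-, hind, hid⟩ := hY
  have hsplit := measure_block_inter_block hind hid 0
    (A := {c : Fin s → ℕ | ∑ i, c i = s}) (B := appendSet {c : Fin 1 → ℕ | c 0 = 0} (survivalSet r))
    .of_discrete .of_discrete
  have htail := measure_block_inter_block hind hid 0
    (A := {c : Fin 1 → ℕ | c 0 = 0}) (B := survivalSet r) .of_discrete .of_discrete
  rw [zero_add] at hsplit htail
  rw [setOf_parisianWindow_zero_succ, measureReal_def, hsplit, block_preimage_appendSet, zero_add,
    htail, conv_eq_measureReal_block, gainPMF_eq_measureReal_block,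
    classicalSurvival_one_eq_measureReal_block]
  simp only [measureReal_def, ENNReal.toReal_mul, mul_assoc]

theorem parisianRuinBy_zero (hY : IsIID μ Y) {r t : ℕ} (ht : t ≤ r + 3) :
    parisianRuinBy μ Y 0 r (r + t)
      = (∑ s ∈ range (t - 1), conv μ Y s s) * gainPMF μ Y 0 * classicalSurvival μ Y 1 (r + 1) := by
  have := hY.2.1.isProbabilityMeasure
  have hevent : {ω | ∃ s, parisianWindow Y 0 r s ω ∧ s + r < r + t}
      = ⋃ s ∈ range (t - 1), {ω | parisianWindow Y 0 r (s + 1) ω} := by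
    ext ω
    simp only [Set.mem_ofPred_eq, Set.mem_iUnion, mem_range, exists_prop]
    constructor
    · rintro ⟨s, hw, hs⟩
      obtain ⟨s, rfl⟩ := Nat.exists_eq_add_of_le' hw.1
      exact ⟨s, by omega, hw⟩
    · rintro ⟨s, hs, hw⟩
      exact ⟨s + 1, hw, by omega⟩
  rw [parisianRuinBy, ← measureReal_def, hevent, measureReal_biUnion_finset, sum_mul, sum_mul]
  · exact sum_congr rfl fun s _ => measureReal_parisianWindow_zero_succ hY r s
  · intro s hs s' hs' hne
    simp only [coe_range, Set.mem_Iio] at hs hs'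
    refine Set.disjoint_left.2 fun ω hw hw' => ?_
    rcases Nat.lt_or_gt_of_ne hne with h | h
    · exact not_parisianWindow_of_lt_of_le hw (by omega) (by omega) hw'
    · exact not_parisianWindow_of_lt_of_le hw' (by omega) (by omega) hw
  · intro s _
    rw [setOf_parisianWindow_zero_succ]
    exact (measurable_block hY.1 0 s .of_discrete).inter
      (measurable_block hY.1 s _ .of_discrete)

theorem parisian_survival_step3_general
    (μ : Measure Ω) (Y : ℕ → Ω → ℕ) (hY : IsIID μ Y)
    (r : ℕ) (hr : 1 ≤ r) :
    1 - parisianRuinBy μ Y 0 r (r + 4)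
      = 1 - (1 + 2 * gainPMF μ Y 0 * gainPMF μ Y 2
              + gainPMF μ Y 1 * (1 + gainPMF μ Y 1))
            * gainPMF μ Y 0 * classicalSurvival μ Y 1 (r + 1) := by
  have := hY.2.1.isProbabilityMeasure
  rw [parisianRuinBy_zero hY (by omega : 4 ≤ r + 3)]
  simp only [show 4 - 1 = 3 from rfl, sum_range_succ, sum_range_zero, conv_succ hY, conv_zero]
  norm_num only [if_true, if_false]
  ring

/-- **Step 3.** The finite-time Parisian survival probability with zero initial reserve at
horizon `r + 4` satisfies `φ*_r(0, r+4) = 1 - [1 + 2 p_0 p_2 + p_1 (1 + p_1)] p_0 φ(1, r+1)`. -/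
theorem parisian_survival_step3
    (μ : Measure Ω) [IsProbabilityMeasure μ] (Y : ℕ → Ω → ℕ) (hY : IsIID μ Y)
    (r : ℕ) (hr : 1 ≤ r) :
    1 - parisianRuinBy μ Y 0 r (r + 4)
      = 1 - (1 + 2 * gainPMF μ Y 0 * gainPMF μ Y 2
              + gainPMF μ Y 1 * (1 + gainPMF μ Y 1))
            * gainPMF μ Y 0 * classicalSurvival μ Y 1 (r + 1) :=
  parisian_survival_step3_general μ Y hY r hr
end
end

section
/- In the discrete-time dual risk model with delay r ∈ ℕ⁺, the infinite-time Parisian survival probability with zero initial reserve satisfies φ*_r(0) = ∑_{k=0}^∞ (p_0 · P_{−1}(τ⁻ ≤ r, R*_{τ⁻} = k) + p_{k+1}) · φ*_r(k). -/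
open MeasureTheory ProbabilityTheory

noncomputable section

variable {Ω : Type*} [MeasurableSpace Ω]

/-!
If the reserve started from `0` stays negative during the steps `1, …, r + 1`, a Parisian window
opens at time `1`. So on survival the first positive time `t` at which the reserve is nonnegative
satisfies `t ≤ r + 1`; no window opens before `t`, and the path survives iff the process
restarted at time `t` from level `R*_t` does. The gains after time `t` are independent of the
first `t` gains and distributed like the whole sequence, whence
`φ*_r(0) = ∑_k P(t ≤ r + 1, R*_t = k) φ*_r(k)`. Splitting on the first gain, which is either `0`
(a down-crossing to `-1`, then a recovery from `-1` within `r` steps) or `k + 1`, turns the weight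
into `p_0 P_{-1}(τ⁻ ≤ r, R*_{τ⁻} = k) + p_{k+1}`.
-/

open Finset

section IID

variable {β : Type*} [mβ : MeasurableSpace β] {μ : Measure Ω} {Y : ℕ → Ω → β}

lemma map_shift_eq_map (hmeas : ∀ i, Measurable (Y i)) (hind : iIndepFun Y μ)
    (hid : ∀ i, IdentDistrib (Y i) (Y 0) μ μ) (d : ℕ) :
    μ.map (fun ω i => Y (d + i) ω) = μ.map (fun ω i => Y i ω) := by
  rw [(hind.precomp (add_right_injective d)).map_fun_eq_infinitePi_map fun i => hmeas _,
    hind.map_fun_eq_infinitePi_map hmeas]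
  simp only [(hid _).map_eq]

lemma indep_iSup_comap_lt_ge (hmeas : ∀ i, Measurable (Y i)) (hind : iIndepFun Y μ) (d : ℕ) :
    Indep (⨆ i < d, mβ.comap (Y i)) (⨆ i ≥ d, mβ.comap (Y i)) μ :=
  indep_iSup_of_disjoint (fun i => (hmeas i).comap_le) hind
    (Set.disjoint_left.2 fun i (hi : i < d) (hi' : d ≤ i) => (lt_of_lt_of_le hi hi').false)

theorem measure_inter_shift_preimage (hmeas : ∀ i, Measurable (Y i)) (hind : iIndepFun Y μ)
    (hid : ∀ i, IdentDistrib (Y i) (Y 0) μ μ) {d : ℕ} {A : Set Ω}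
    (hA : MeasurableSet[⨆ i < d, mβ.comap (Y i)] A) {B : Set (ℕ → β)} (hB : MeasurableSet B) :
    μ (A ∩ (fun ω i => Y (d + i) ω) ⁻¹' B) = μ A * μ ((fun ω i => Y i ω) ⁻¹' B) := by
  have hfuture : Measurable[⨆ i ≥ d, mβ.comap (Y i)] (fun ω i => Y (d + i) ω) :=
    @measurable_pi_lambda _ _ _ (⨆ i ≥ d, mβ.comap (Y i)) _ _ fun i =>
      Measurable.of_comap_le <| le_iSup₂_of_le (f := fun j (_ : j ≥ d) => mβ.comap (Y j))
        (d + i) (Nat.le_add_right d i) le_rfl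
  rw [(Indep_iff _ _ μ).1 (indep_iSup_comap_lt_ge hmeas hind d) _ _ hA (hfuture hB),
    ← Measure.map_apply (measurable_pi_iff.2 fun i => hmeas _) hB,
    map_shift_eq_map hmeas hind hid, Measure.map_apply (measurable_pi_iff.2 hmeas) hB]

end IID

lemma measurable_of_lt_iSup_comap {α β : Type*} [mβ : MeasurableSpace β] {Y : ℕ → α → β}
    {d i : ℕ} (hi : i < d) : Measurable[⨆ j < d, mβ.comap (Y j)] (Y i) :=
  Measurable.of_comap_le (le_iSup₂ (f := fun j (_ : j < d) => mβ.comap (Y j)) i hi)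

section Pathwise

variable {α : Type*} {Y : ℕ → α → ℕ} {ω : α}

def parisianRuinSet (Y : ℕ → α → ℕ) (u : ℤ) (r : ℕ) : Set α :=
  {ω | ∃ s, parisianWindow Y u r s ω}

def firstReturnAt (Y : ℕ → α → ℕ) (t k : ℕ) : Set α :=
  {ω | 1 ≤ t ∧ reserve Y 0 t ω = k ∧ ∀ s, 1 ≤ s → s < t → reserve Y 0 s ω < 0}

def recoveryWithin (Y : ℕ → α → ℕ) (r k : ℕ) : Set α :=
  {ω | ∃ n, 1 ≤ n ∧ n ≤ r ∧ reserve Y (-1) n ω = (k : ℤ) ∧ ∀ s < n, reserve Y (-1) s ω < 0}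

lemma reserve_add_s8 (Y : ℕ → α → ℕ) (u : ℤ) (d m : ℕ) (ω : α) :
    reserve Y u (d + m) ω = reserve (fun i => Y (d + i)) (reserve Y u d ω) m ω := by
  simp only [reserve, sum_range_add]
  push_cast
  ring

lemma reserve_one (Y : ℕ → α → ℕ) (u : ℤ) (ω : α) : reserve Y u 1 ω = u - 1 + Y 0 ω := by
  simp [reserve]

lemma reserve_one_add_of_eq_zero (h0 : Y 0 ω = 0) (n : ℕ) :
    reserve Y 0 (1 + n) ω = reserve (fun i => Y (1 + i)) (-1) n ω := by
  rw [reserve_add_s8, reserve_one, h0]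
  norm_num

lemma parisianWindow_shift {u v : ℤ} {d r t : ℕ} (hv : reserve Y u d ω = v) (ht : 1 ≤ t) :
    parisianWindow (fun i => Y (d + i)) v r t ω ↔ parisianWindow Y u r (d + t) ω := by
  have hshift : ∀ m, reserve Y u (d + m) ω = reserve (fun i => Y (d + i)) v m ω := by
    intro m; rw [reserve_add_s8, hv]
  have hpred : d + t - 1 = d + (t - 1) := by omega
  simp only [parisianWindow, hpred, hshift]
  constructor
  · rintro ⟨-, h0, h1, hneg⟩
    refine ⟨by omega, h0, h1, fun m hm hm' => ?_⟩
    obtain ⟨j, rfl⟩ := Nat.exists_eq_add_of_le (le_of_add_le_left hm)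
    rw [hshift]
    exact hneg j (by omega) (by omega)
  · rintro ⟨-, h0, h1, hneg⟩
    exact ⟨ht, h0, h1, fun m hm hm' => by
      simpa only [hshift] using hneg (d + m) (by omega) (by omega)⟩

lemma firstReturnAt_unique {t t' k k' : ℕ} (h : ω ∈ firstReturnAt Y t k)
    (h' : ω ∈ firstReturnAt Y t' k') : t = t' ∧ k = k' := by
  obtain ⟨ht, hk, hneg⟩ := h
  obtain ⟨ht', hk', hneg'⟩ := h'
  have htt' : t = t' := by
    by_contra hne
    rcases Nat.lt_or_gt_of_ne hne with hlt | hlt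
    · linarith [hneg' t ht hlt]
    · linarith [hneg t' ht' hlt]
  subst htt'
  exact ⟨rfl, by omega⟩

lemma disjoint_firstReturnAt {t t' k k' : ℕ} (h : (t, k) ≠ (t', k')) :
    Disjoint (firstReturnAt Y t k) (firstReturnAt Y t' k') :=
  Set.disjoint_left.2 fun _ h₁ h₂ => h (Prod.ext_iff.2 (firstReturnAt_unique h₁ h₂))

lemma exists_firstReturnAt_of_notMem_parisianRuinSet {r : ℕ}
    (hω : ω ∉ parisianRuinSet Y 0 r) :
    ∃ k t, t < r + 2 ∧ ω ∈ firstReturnAt Y t k ∧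
      ω ∉ parisianRuinSet (fun i => Y (t + i)) k r := by
  simp only [parisianRuinSet, Set.mem_ofPred_eq, not_exists] at hω ⊢
  have hex : ∃ t, (1 ≤ t ∧ t ≤ r + 1) ∧ 0 ≤ reserve Y 0 t ω := by
    by_contra! hneg
    have h1 : reserve Y 0 1 ω = -1 := by
      have := hneg 1 ⟨le_rfl, by omega⟩
      rw [reserve_one] at this ⊢
      omega
    exact hω 1 ⟨le_rfl, by simp [reserve], h1, fun m hm hm' => hneg m ⟨hm, by omega⟩⟩
  obtain ⟨⟨ht, htr⟩, hnonneg⟩ := Nat.find_spec hex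
  set t := Nat.find hex
  have hneg : ∀ s, 1 ≤ s → s < t → reserve Y 0 s ω < 0 := fun s hs hst =>
    not_le.1 fun h => Nat.find_min hex hst ⟨⟨hs, by omega⟩, h⟩
  have hk : reserve Y 0 t ω = ((reserve Y 0 t ω).toNat : ℤ) := (Int.toNat_of_nonneg hnonneg).symm
  refine ⟨_, t, by omega, ⟨ht, hk, hneg⟩, fun s hw => ?_⟩
  exact hω (t + s) ((parisianWindow_shift hk hw.1).1 hw)

lemma notMem_parisianRuinSet_of_firstReturnAt {r t k : ℕ} (htr : t < r + 2)
    (hret : ω ∈ firstReturnAt Y t k) (hsurv : ω ∉ parisianRuinSet (fun i => Y (t + i)) k r) :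
    ω ∉ parisianRuinSet Y 0 r := by
  obtain ⟨ht, hk, hneg⟩ := hret
  rintro ⟨s, hw⟩
  rcases lt_or_ge t s with hts | hst
  · obtain ⟨j, rfl⟩ := Nat.exists_eq_add_of_lt hts
    exact hsurv ⟨j + 1, (parisianWindow_shift hk (Nat.le_add_left 1 j)).2 hw⟩
  · obtain ⟨hs, hzero, -, hwneg⟩ := hw
    rcases Nat.lt_or_ge 1 s with hs1 | hs1
    · linarith [hneg (s - 1) (by omega) (by omega)]
    · linarith [hwneg t (by omega) (by omega)]

lemma parisianRuinSet_compl_zero (Y : ℕ → α → ℕ) (r : ℕ) :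
    (parisianRuinSet Y 0 r)ᶜ = ⋃ k, ⋃ t ∈ range (r + 2),
      firstReturnAt Y t k ∩ (parisianRuinSet (fun i => Y (t + i)) k r)ᶜ := by
  ext ω
  simp only [Set.mem_compl_iff, Set.mem_iUnion, Set.mem_inter_iff, mem_range, exists_prop]
  exact ⟨exists_firstReturnAt_of_notMem_parisianRuinSet,
    fun ⟨_, _, htr, hret, hsurv⟩ => notMem_parisianRuinSet_of_firstReturnAt htr hret hsurv⟩

lemma biUnion_firstReturnAt (r k : ℕ) :
    ⋃ t ∈ range (r + 2), firstReturnAt Y t k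
      = {ω | Y 0 ω = 0} ∩ recoveryWithin (fun i => Y (1 + i)) r k ∪ {ω | Y 0 ω = k + 1} := by
  ext ω
  simp only [Set.mem_iUnion, mem_range, Set.mem_union, Set.mem_inter_iff, exists_prop]
  constructor
  · rintro ⟨t, htr, ht, hk, hneg⟩
    obtain rfl | ⟨n, hn, rfl⟩ : t = 1 ∨ ∃ n, 1 ≤ n ∧ t = 1 + n :=
      (eq_or_lt_of_le ht).imp Eq.symm fun h => ⟨t - 1, by omega, by omega⟩
    · rw [reserve_one] at hk
      exact Or.inr (by simp only [Set.mem_ofPred_eq]; omega)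
    · have h0 : Y 0 ω = 0 := by
        have := hneg 1 le_rfl (by omega)
        rw [reserve_one] at this
        omega
      refine Or.inl ⟨h0, n, hn, by omega, ?_, fun s hs => ?_⟩
      · rwa [← reserve_one_add_of_eq_zero h0]
      · rw [← reserve_one_add_of_eq_zero h0]
        exact hneg (1 + s) (by omega) (by omega)
  · rintro (⟨h0, n, hn, hnr, hk, hneg⟩ | hk)
    · refine ⟨1 + n, by omega, by omega, ?_, fun s hs hsn => ?_⟩
      · rwa [reserve_one_add_of_eq_zero h0]
      · obtain ⟨j, rfl⟩ := Nat.exists_eq_add_of_le hs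
        rw [reserve_one_add_of_eq_zero h0]
        exact hneg j (by omega)
    · refine ⟨1, by omega, le_rfl, ?_, fun s hs hs' => absurd hs' (by omega)⟩
      rw [reserve_one]
      simp only [Set.mem_ofPred_eq] at hk
      omega

end Pathwise

section Measurability

variable {α : Type*} {m : MeasurableSpace α} {Y : ℕ → α → ℕ}

lemma measurable_reserve {n : ℕ} (hY : ∀ i < n, Measurable (Y i)) (u : ℤ) :
    Measurable (reserve Y u n) :=
  (Finset.measurable_sum _ fun i hi => measurable_from_top.comp (hY i (mem_range.1 hi))).const_add _

lemma measurableSet_parisianRuinSet (hY : ∀ i, Measurable (Y i)) (u : ℤ) (r : ℕ) :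
    MeasurableSet (parisianRuinSet Y u r) := by
  have hR : ∀ n, Measurable (reserve Y u n) := fun n => measurable_reserve (fun i _ => hY i) u
  refine Measurable.setOf (Measurable.exists fun s => ?_)
  unfold parisianWindow
  fun_prop

lemma measurableSet_recoveryWithin (hY : ∀ i, Measurable (Y i)) (r k : ℕ) :
    MeasurableSet (recoveryWithin Y r k) := by
  have hR : ∀ n, Measurable (reserve Y (-1) n) := fun n => measurable_reserve (fun i _ => hY i) _
  refine Measurable.setOf (Measurable.exists fun s => ?_)
  fun_prop

lemma measurableSet_firstReturnAt {t : ℕ} (hY : ∀ i < t, Measurable (Y i)) (k : ℕ) :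
    MeasurableSet (firstReturnAt Y t k) := by
  have hR : ∀ n ≤ t, Measurable (reserve Y 0 n) := fun n hn =>
    measurable_reserve (fun i hi => hY i (lt_of_lt_of_le hi hn)) 0
  refine Measurable.setOf (measurable_const.and (((hR t le_rfl).eq_const _).and
    (Measurable.forall fun s => ?_)))
  by_cases hs : s < t
  · fun_prop (disch := omega)
  · simp only [hs, false_imp_iff, imp_true_iff]
    exact measurable_const

end Measurability

section Measure

variable {μ : Measure Ω} {Y : ℕ → Ω → ℕ}

lemma measure_firstReturnAt_inter (hY : IsIID μ Y) (r t k : ℕ) :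
    μ (firstReturnAt Y t k ∩ (parisianRuinSet (fun i => Y (t + i)) k r)ᶜ)
      = μ (firstReturnAt Y t k) * μ (parisianRuinSet Y k r)ᶜ :=
  -- for the shifted gains this set is, by definition, the preimage of the same set for the
  -- coordinate process on `ℕ → ℕ`
  measure_inter_shift_preimage hY.1 hY.2.1 hY.2.2
    (measurableSet_firstReturnAt (fun _ hi => measurable_of_lt_iSup_comap hi) k)
    (measurableSet_parisianRuinSet (Y := fun i (g : ℕ → ℕ) => g i) measurable_pi_apply k r).compl

lemma measure_zero_inter_recoveryWithin (hY : IsIID μ Y) (r k : ℕ) :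
    μ ({ω | Y 0 ω = 0} ∩ recoveryWithin (fun i => Y (1 + i)) r k)
      = μ {ω | Y 0 ω = 0} * μ (recoveryWithin Y r k) :=
  measure_inter_shift_preimage hY.1 hY.2.1 hY.2.2
    (measurable_of_lt_iSup_comap zero_lt_one (measurableSet_singleton 0))
    (measurableSet_recoveryWithin (Y := fun i (g : ℕ → ℕ) => g i) measurable_pi_apply r k)

lemma measure_biUnion_firstReturnAt (hY : IsIID μ Y) (r k : ℕ) :
    μ (⋃ t ∈ range (r + 2), firstReturnAt Y t k)
      = μ {ω | Y 0 ω = 0} * μ (recoveryWithin Y r k) + μ {ω | Y 0 ω = k + 1} := by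
  rw [biUnion_firstReturnAt, measure_union _ ((hY.1 0).eq_const _).setOf,
    measure_zero_inter_recoveryWithin hY]
  exact Set.disjoint_left.2 fun ω h₁ h₂ => by
    simp only [Set.mem_inter_iff, Set.mem_ofPred_eq] at h₁ h₂
    omega

lemma measure_parisianRuinSet_compl_zero (hY : IsIID μ Y) (r : ℕ) :
    μ (parisianRuinSet Y 0 r)ᶜ
      = ∑' k, μ (⋃ t ∈ range (r + 2), firstReturnAt Y t k) * μ (parisianRuinSet Y k r)ᶜ := by
  have hret : ∀ t k, MeasurableSet (firstReturnAt Y t k) := fun t k =>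
    measurableSet_firstReturnAt (fun i _ => hY.1 i) k
  have hpiece : ∀ t k, MeasurableSet
      (firstReturnAt Y t k ∩ (parisianRuinSet (fun i => Y (t + i)) k r)ᶜ) := fun t k =>
    (hret t k).inter (measurableSet_parisianRuinSet (fun i => hY.1 _) k r).compl
  rw [parisianRuinSet_compl_zero,
    measure_iUnion _ fun k => Finset.measurableSet_biUnion _ fun t _ => hpiece t k]
  · refine tsum_congr fun k => ?_
    rw [measure_biUnion_finset _ fun t _ => hpiece t k,
      measure_biUnion_finset _ fun t _ => hret t k, sum_mul]
    · exact sum_congr rfl fun t _ => measure_firstReturnAt_inter hY r t k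
    · exact fun t _ t' _ h => disjoint_firstReturnAt (by simpa using h)
    · exact fun t _ t' _ h => (disjoint_firstReturnAt (by simpa using h)).mono
        Set.inter_subset_left Set.inter_subset_left
  · exact fun k k' h => Set.disjoint_iUnion₂_left.2 fun t _ => Set.disjoint_iUnion₂_right.2
      fun t' _ => (disjoint_firstReturnAt (by simp [h])).mono
        Set.inter_subset_left Set.inter_subset_left

lemma one_sub_parisianRuin [IsProbabilityMeasure μ] (hY : IsIID μ Y) (u : ℤ) (r : ℕ) :
    1 - parisianRuin μ Y u r = μ.real (parisianRuinSet Y u r)ᶜ :=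
  (probReal_compl_eq_one_sub (measurableSet_parisianRuinSet hY.1 u r)).symm

end Measure

theorem parisian_survival_zero_reserve_general
    (μ : Measure Ω) [IsProbabilityMeasure μ] (Y : ℕ → Ω → ℕ) (hY : IsIID μ Y)
    (r : ℕ) :
    1 - parisianRuin μ Y 0 r
      = ∑' k : ℕ, (gainPMF μ Y 0 * recoveryWithinProb μ Y r k + gainPMF μ Y (k + 1))
          * (1 - parisianRuin μ Y (k : ℤ) r) := by
  rw [one_sub_parisianRuin hY, measureReal_def, measure_parisianRuinSet_compl_zero hY,
    ENNReal.tsum_toReal_eq fun k => ENNReal.mul_ne_top (measure_ne_top _ _) (measure_ne_top _ _)]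
  refine tsum_congr fun k => ?_
  rw [measure_biUnion_firstReturnAt hY, one_sub_parisianRuin hY, measureReal_def,
    ENNReal.toReal_mul, ENNReal.toReal_add (ENNReal.mul_ne_top (measure_ne_top _ _)
      (measure_ne_top _ _)) (measure_ne_top _ _), ENNReal.toReal_mul]
  rfl

/-- The infinite-time Parisian survival probability with zero initial reserve satisfies
`φ*_r(0) = ∑_{k=0}^∞ (p_0 P_{-1}(τ⁻ ≤ r, R*_{τ⁻} = k) + p_{k+1}) φ*_r(k)`. -/
theorem parisian_survival_zero_reserve
    (μ : Measure Ω) [IsProbabilityMeasure μ] (Y : ℕ → Ω → ℕ) (hY : IsIID μ Y)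
    (hnet : NetProfit μ Y) (r : ℕ) (hr : 1 ≤ r) :
    1 - parisianRuin μ Y 0 r
      = ∑' k : ℕ, (gainPMF μ Y 0 * recoveryWithinProb μ Y r k + gainPMF μ Y (k + 1))
          * (1 - parisianRuin μ Y (k : ℤ) r) :=
  parisian_survival_zero_reserve_general μ Y hY r
end
end

section
/- In the discrete-time dual risk model with Binomial/Geometric gains with parameters b ∈ (0, 1] and q ∈ (0, 1) satisfying b + q > 1, the infinite-time dual ruin probability is ψ*(u) = ((1 − b)/q)^u for every u ∈ ℕ. -/
open MeasureTheory ProbabilityTheory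

noncomputable section

variable {Ω : Type*} [MeasurableSpace Ω]

/-!
Put `ρ = (1 - b) / q`, so that `ρ q = 1 - b` and `E[ρ ^ Y] = ρ`, i.e. `E[ρ ^ (Y - 1)] = 1`.
Since the reserve goes down by at most one per period, it sits exactly at `0` at ruin, and
`ρ ^ R*_{n ∧ τ*}` is a martingale bounded by `1` with mean `ρ ^ u`. Under the net profit condition
the strong law of large numbers sends `R*_n` to `∞` a.s., so off the ruin event the martingale
tends to `0`, while on it it equals `1` eventually; dominated convergence gives `ψ*(u) = ρ ^ u`.
-/

open Filter Topology
open scoped ENNReal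

section DualReserve

omit [MeasurableSpace Ω]

variable {Y : ℕ → Ω → ℕ}

lemma reserve_zero (Y : ℕ → Ω → ℕ) (u : ℤ) (ω : Ω) : reserve Y u 0 ω = u := by
  simp [reserve]

lemma reserve_succ (Y : ℕ → Ω → ℕ) (u : ℤ) (n : ℕ) (ω : Ω) :
    reserve Y u (n + 1) ω = reserve Y u n ω - 1 + Y n ω := by
  simp only [reserve, Finset.sum_range_succ]
  push_cast
  ring

/-- The reserve moves down by at most one per period, so it cannot jump over `0`. -/
lemma one_le_reserve_of_forall_ne_zero {u : ℤ} (hu : 0 ≤ u) {n : ℕ} {ω : Ω}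
    (h : ∀ m ≤ n, reserve Y u m ω ≠ 0) : 1 ≤ reserve Y u n ω := by
  induction n with
  | zero =>
    have := h 0 le_rfl
    rw [reserve_zero] at this ⊢
    omega
  | succ n ih =>
    have hn := ih fun m hm => h m (hm.trans n.le_succ)
    have hsucc := h (n + 1) le_rfl
    rw [reserve_succ] at hsucc ⊢
    omega

lemma tendsto_reserve_atTop_of_tendsto_average {ω : Ω} {m : ℝ} (hm : 1 < m)
    (h : Tendsto (fun n : ℕ => (∑ i ∈ Finset.range n, (Y i ω : ℝ)) / n) atTop (𝓝 m)) (u : ℤ) :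
    Tendsto (fun n => reserve Y u n ω) atTop atTop := by
  rw [← tendsto_intCast_atTop_iff (R := ℝ)]
  have hlin : Tendsto (fun n : ℕ => ((∑ i ∈ Finset.range n, (Y i ω : ℝ)) / n - 1) * n + u)
      atTop atTop :=
    tendsto_atTop_add_const_right _ _
      ((h.sub_const 1).pos_mul_atTop (by linarith) tendsto_natCast_atTop_atTop)
  refine hlin.congr' ?_
  filter_upwards [eventually_gt_atTop 0] with n hn
  have : (n : ℝ) ≠ 0 := Nat.cast_ne_zero.mpr hn.ne'
  simp only [reserve]
  push_cast
  field_simp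
  ring

/-- The event `{τ* ≤ n}`. -/
def ruinedBy (Y : ℕ → Ω → ℕ) (u : ℤ) (n : ℕ) : Set Ω :=
  {ω | ∃ m ≤ n, reserve Y u m ω = 0}

/-- `r ^ R*_{n ∧ τ*}`, using `R*_{τ*} = 0`. -/
def stoppedPowReserve (r : ℝ≥0∞) (Y : ℕ → Ω → ℕ) (u : ℤ) (n : ℕ) (ω : Ω) : ℝ≥0∞ :=
  open Classical in
  if ω ∈ ruinedBy Y u n then 1 else r ^ (reserve Y u n ω).toNat

abbrev pastGains (Y : ℕ → Ω → ℕ) (n : ℕ) : MeasurableSpace Ω :=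
  ⨆ i ∈ Set.Iio n, MeasurableSpace.comap (Y i) inferInstance

lemma measurable_reserve_pastGains {u : ℤ} {m n : ℕ} (hmn : m ≤ n) :
    Measurable[pastGains Y n] (reserve Y u m) := by
  unfold reserve
  refine measurable_const.add (Finset.measurable_sum _ fun i hi => ?_)
  have hi : i ∈ Set.Iio n := lt_of_lt_of_le (Finset.mem_range.mp hi) hmn
  exact (measurable_from_nat.comp (comap_measurable (Y i))).mono (le_iSup₂ (f := fun i _ =>
    MeasurableSpace.comap (Y i) inferInstance) i hi) le_rfl

lemma measurableSet_ruinedBy_pastGains (u : ℤ) (n : ℕ) :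
    MeasurableSet[pastGains Y n] (ruinedBy Y u n) := by
  have : ruinedBy Y u n = ⋃ m ∈ Set.Iic n, reserve Y u m ⁻¹' {0} := by
    ext ω; simp [ruinedBy]
  rw [this]
  exact MeasurableSet.biUnion (Set.to_countable _) fun m hm =>
    measurable_reserve_pastGains hm (measurableSet_singleton 0)

lemma mem_ruinedBy_succ {u : ℤ} {n : ℕ} {ω : Ω} :
    ω ∈ ruinedBy Y u (n + 1) ↔ ω ∈ ruinedBy Y u n ∨ reserve Y u (n + 1) ω = 0 := by
  simp only [ruinedBy, Set.mem_ofPred_eq]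
  constructor
  · rintro ⟨m, hm, hm0⟩
    rcases Nat.le_succ_iff.mp hm with hm | rfl
    exacts [Or.inl ⟨m, hm, hm0⟩, Or.inr hm0]
  · rintro (⟨m, hm, hm0⟩ | h)
    exacts [⟨m, hm.trans n.le_succ, hm0⟩, ⟨n + 1, le_rfl, h⟩]

lemma one_le_reserve_of_notMem_ruinedBy {u : ℤ} (hu : 0 ≤ u) {n : ℕ} {ω : Ω}
    (h : ω ∉ ruinedBy Y u n) : 1 ≤ reserve Y u n ω :=
  one_le_reserve_of_forall_ne_zero hu fun m hm hm0 => h ⟨m, hm, hm0⟩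

lemma stoppedPowReserve_eq_add_mul (r : ℝ≥0∞) {u : ℤ} (hu : 0 ≤ u) (n : ℕ) (ω : Ω) :
    stoppedPowReserve r Y u n ω = (ruinedBy Y u n).indicator 1 ω
      + (ruinedBy Y u n)ᶜ.indicator (fun ω => r ^ ((reserve Y u n ω).toNat - 1)) ω * r := by
  by_cases h : ω ∈ ruinedBy Y u n
  · simp [stoppedPowReserve, h]
  · have h1 := one_le_reserve_of_notMem_ruinedBy hu h
    have : (reserve Y u n ω).toNat = (reserve Y u n ω).toNat - 1 + 1 := by omega
    simp only [stoppedPowReserve, h, if_false, Set.indicator_of_notMem h,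
      Set.indicator_of_mem (Set.mem_compl h), zero_add]
    rw [this, pow_succ, Nat.add_sub_cancel]

/-- Before ruin, one more period replaces the factor `r` of `stoppedPowReserve_eq_add_mul` by
`r ^ Y n`, which is independent of `pastGains Y n`. -/
lemma stoppedPowReserve_succ_eq_add_mul (r : ℝ≥0∞) {u : ℤ} (hu : 0 ≤ u) (n : ℕ) (ω : Ω) :
    stoppedPowReserve r Y u (n + 1) ω = (ruinedBy Y u n).indicator 1 ω
      + (ruinedBy Y u n)ᶜ.indicator (fun ω => r ^ ((reserve Y u n ω).toNat - 1)) ω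
        * r ^ Y n ω := by
  by_cases h : ω ∈ ruinedBy Y u n
  · simp [stoppedPowReserve, h, mem_ruinedBy_succ.mpr (Or.inl h)]
  · have h1 := one_le_reserve_of_notMem_ruinedBy hu h
    have hstep := reserve_succ Y u n ω
    simp only [Set.indicator_of_notMem h, Set.indicator_of_mem (Set.mem_compl h), zero_add,
      ← pow_add]
    by_cases h0 : reserve Y u (n + 1) ω = 0
    · rw [stoppedPowReserve, if_pos (mem_ruinedBy_succ.mpr (Or.inr h0)), show (reserve Y u n ω).toNat - 1 + Y n ω = 0 by omega, pow_zero]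
    · have hsucc : ω ∉ ruinedBy Y u (n + 1) := by simp [mem_ruinedBy_succ, h, h0]
      rw [stoppedPowReserve, if_neg hsucc]
      congr 1
      omega

lemma tendsto_stoppedPowReserve {r : ℝ≥0∞} (hr : r < 1) {u : ℤ} {ω : Ω}
    (hω : Tendsto (fun n => reserve Y u n ω) atTop atTop) :
    Tendsto (fun n => stoppedPowReserve r Y u n ω) atTop
      (𝓝 ({ω | ∃ n, reserve Y u n ω = 0}.indicator 1 ω)) := by
  by_cases hruin : ∃ n, reserve Y u n ω = 0
  · obtain ⟨n₀, hn₀⟩ := hruin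
    rw [Set.indicator_of_mem (show ω ∈ {ω | ∃ n, reserve Y u n ω = 0} from ⟨n₀, hn₀⟩)]
    refine tendsto_const_nhds.congr' ?_
    filter_upwards [eventually_ge_atTop n₀] with n hn
    rw [stoppedPowReserve, if_pos ⟨n₀, hn, hn₀⟩, Pi.one_apply]
  · rw [Set.indicator_of_notMem (show ω ∉ {ω | ∃ n, reserve Y u n ω = 0} from hruin)]
    have htoNat : Tendsto (fun n => (reserve Y u n ω).toNat) atTop atTop :=
      tendsto_atTop.2 fun N => (tendsto_atTop.1 hω N).mono fun n hn => by omega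
    refine ((ENNReal.tendsto_pow_atTop_nhds_zero_of_lt_one hr).comp htoNat).congr fun n => ?_
    rw [stoppedPowReserve, if_neg fun ⟨m, _, hm⟩ => hruin ⟨m, hm⟩]
    rfl

lemma stoppedPowReserve_zero (r : ℝ≥0∞) (u : ℕ) (ω : Ω) :
    stoppedPowReserve r Y u 0 ω = r ^ u := by
  rcases u.eq_zero_or_pos with rfl | hu
  · simp [stoppedPowReserve, ruinedBy, reserve_zero]
  · have : ω ∉ ruinedBy Y u 0 := fun ⟨m, hm, hm0⟩ => by
      rw [Nat.le_zero.mp hm, reserve_zero] at hm0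
      omega
    simp [stoppedPowReserve, this, reserve_zero]

lemma stoppedPowReserve_le_one {r : ℝ≥0∞} (hr : r ≤ 1) (u : ℤ) (n : ℕ) (ω : Ω) :
    stoppedPowReserve r Y u n ω ≤ 1 := by
  unfold stoppedPowReserve
  split
  exacts [le_rfl, pow_le_one' hr _]

lemma measurable_stoppedPowReserve_pastGains (r : ℝ≥0∞) (u : ℤ) (n : ℕ) :
    Measurable[pastGains Y n] (stoppedPowReserve r Y u n) :=
  Measurable.ite (measurableSet_ruinedBy_pastGains u n) measurable_const
    ((Measurable.of_discrete (f := fun R : ℤ => r ^ R.toNat)).comp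
      (measurable_reserve_pastGains le_rfl))

end DualReserve

section RuinProbability

variable {μ : Measure Ω} {Y : ℕ → Ω → ℕ}

lemma pastGains_le (hmeas : ∀ i, Measurable (Y i)) (n : ℕ) :
    pastGains Y n ≤ ‹MeasurableSpace Ω› :=
  iSup₂_le fun i _ => (hmeas i).comap_le

lemma lintegral_stoppedPowReserve_succ (hmeas : ∀ i, Measurable (Y i)) (hind : iIndepFun Y μ)
    {r : ℝ≥0∞} {n : ℕ} (hr : ∫⁻ ω, r ^ Y n ω ∂μ = r) {u : ℤ} (hu : 0 ≤ u) :
    ∫⁻ ω, stoppedPowReserve r Y u (n + 1) ω ∂μ = ∫⁻ ω, stoppedPowReserve r Y u n ω ∂μ := by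
  have hcomap_le : ∀ i, MeasurableSpace.comap (Y i) inferInstance ≤ ‹MeasurableSpace Ω› :=
    fun i => (hmeas i).comap_le
  have hpast_le := pastGains_le hmeas n
  have hindep : Indep (pastGains Y n) (MeasurableSpace.comap (Y n) inferInstance) μ := by
    have := indep_iSup_of_disjoint hcomap_le hind.iIndep
      (Set.disjoint_singleton_right.mpr (lt_irrefl n) : Disjoint (Set.Iio n) {n})
    simpa only [Set.mem_singleton_iff, iSup_iSup_eq_left] using this
  have hruin : MeasurableSet[pastGains Y n] (ruinedBy Y u n) :=
    measurableSet_ruinedBy_pastGains u n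
  have hpre : Measurable[pastGains Y n]
      ((ruinedBy Y u n)ᶜ.indicator fun ω => r ^ ((reserve Y u n ω).toNat - 1)) :=
    ((Measurable.of_discrete (f := fun R : ℤ => r ^ (R.toNat - 1))).comp
      (measurable_reserve_pastGains le_rfl)).indicator hruin.compl
  have hjump : Measurable[MeasurableSpace.comap (Y n) inferInstance] fun ω => r ^ Y n ω :=
    Measurable.of_discrete.comp (comap_measurable (Y n))
  have hruin' : MeasurableSet (ruinedBy Y u n) := hpast_le _ hruin
  simp_rw [stoppedPowReserve_succ_eq_add_mul r hu, stoppedPowReserve_eq_add_mul r hu]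
  rw [lintegral_add_left (measurable_one.indicator hruin'),
    lintegral_add_left (measurable_one.indicator hruin'),
    lintegral_mul_eq_lintegral_mul_lintegral_of_independent_measurableSpace hpast_le
      (hcomap_le n) hindep hpre hjump, hr, lintegral_mul_const _ (hpre.mono hpast_le le_rfl)]

lemma ae_tendsto_reserve_atTop (hY : IsIID μ Y) (hprofit : NetProfit μ Y) (u : ℤ) :
    ∀ᵐ ω ∂μ, Tendsto (fun n => reserve Y u n ω) atTop atTop := by
  obtain ⟨hmeas, hind, hident⟩ := hY
  have hslln := strong_law_ae_real (fun i ω => (Y i ω : ℝ)) hprofit.1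
    (fun i j hij => (hind.indepFun hij).comp measurable_from_nat measurable_from_nat)
    (fun i => (hident i).comp measurable_from_nat)
  filter_upwards [hslln] with ω hω
  exact tendsto_reserve_atTop_of_tendsto_average hprofit.2 hω u

lemma lintegral_stoppedPowReserve [IsProbabilityMeasure μ] (hY : IsIID μ Y) {r : ℝ≥0∞}
    (hr : ∫⁻ ω, r ^ Y 0 ω ∂μ = r) (u n : ℕ) :
    ∫⁻ ω, stoppedPowReserve r Y u n ω ∂μ = r ^ u := by
  obtain ⟨hmeas, hind, hident⟩ := hY
  induction n with
  | zero => simp [stoppedPowReserve_zero]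
  | succ n ih =>
    have hrn : ∫⁻ ω, r ^ Y n ω ∂μ = r := by
      refine Eq.trans ?_ hr
      exact ((hident n).comp (Measurable.of_discrete (f := fun k : ℕ => r ^ k))).lintegral_eq
    rw [lintegral_stoppedPowReserve_succ hmeas hind hrn (Int.natCast_nonneg u), ih]

theorem dualRuinProb_eq_pow [IsProbabilityMeasure μ] (hY : IsIID μ Y) (hprofit : NetProfit μ Y)
    {r : ℝ≥0∞} (hr1 : r < 1) (hr : ∫⁻ ω, r ^ Y 0 ω ∂μ = r) (u : ℕ) :
    dualRuinProb μ Y u = (r ^ u).toReal := by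
  have hmeas := hY.1
  have hruin : MeasurableSet {ω | ∃ n, reserve Y u n ω = 0} := by
    simp only [Set.ofPred_exists]
    exact MeasurableSet.iUnion fun n => ((measurable_reserve_pastGains le_rfl).mono
      (pastGains_le hmeas n) le_rfl) (measurableSet_singleton 0)
  have hlim := tendsto_lintegral_of_dominated_convergence (μ := μ) 1
    (fun n => (measurable_stoppedPowReserve_pastGains r u n).mono (pastGains_le hmeas n) le_rfl)
    (fun n => ae_of_all _ (stoppedPowReserve_le_one hr1.le u n)) (by simp)
    ((ae_tendsto_reserve_atTop hY hprofit u).mono fun ω hω => tendsto_stoppedPowReserve hr1 hω)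
  simp only [lintegral_stoppedPowReserve hY hr, lintegral_indicator_one hruin] at hlim
  rw [dualRuinProb, tendsto_nhds_unique hlim tendsto_const_nhds]

end RuinProbability

section Distribution

variable {μ : Measure Ω}

lemma lintegral_ofReal_comp_eq_of_hasSum {X : Ω → ℕ} (hX : Measurable X) {p f : ℕ → ℝ}
    (hp : ∀ k, μ {ω | X ω = k} = ENNReal.ofReal (p k)) (hp0 : ∀ k, 0 ≤ p k) (hf0 : ∀ k, 0 ≤ f k)
    {s : ℝ} (hs : HasSum (fun k => f k * p k) s) :
    ∫⁻ ω, ENNReal.ofReal (f (X ω)) ∂μ = ENNReal.ofReal s := by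
  rw [← lintegral_map (f := fun k => ENNReal.ofReal (f k)) Measurable.of_discrete hX,
    lintegral_countable', ← hs.tsum_eq,
    ENNReal.ofReal_tsum_of_nonneg (fun k => mul_nonneg (hf0 k) (hp0 k)) hs.summable]
  refine tsum_congr fun k => ?_
  rw [Measure.map_apply hX (measurableSet_singleton k), ENNReal.ofReal_mul (hf0 k)]
  exact congrArg _ (hp k)

lemma netProfit_of_hasSum {Y : ℕ → Ω → ℕ} (hY : Measurable (Y 0)) {p : ℕ → ℝ}
    (hp : ∀ k, μ {ω | Y 0 ω = k} = ENNReal.ofReal (p k)) (hp0 : ∀ k, 0 ≤ p k) {m : ℝ}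
    (hm : HasSum (fun k : ℕ => (k : ℝ) * p k) m) (hm1 : 1 < m) : NetProfit μ Y := by
  have hlint : ∫⁻ ω, ENNReal.ofReal (Y 0 ω) ∂μ = ENNReal.ofReal m :=
    lintegral_ofReal_comp_eq_of_hasSum hY hp hp0 (fun k => Nat.cast_nonneg k) hm
  have hnonneg : 0 ≤ᵐ[μ] fun ω => (Y 0 ω : ℝ) := ae_of_all _ fun ω => Nat.cast_nonneg _
  have hasm : AEStronglyMeasurable (fun ω => (Y 0 ω : ℝ)) μ :=
    (measurable_from_nat.comp hY).aestronglyMeasurable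
  refine ⟨⟨hasm, (hasFiniteIntegral_iff_ofReal hnonneg).2 (hlint ▸ ENNReal.ofReal_lt_top)⟩, ?_⟩
  rw [integral_eq_lintegral_of_nonneg_ae hnonneg hasm, hlint,
    ENNReal.toReal_ofReal (by linarith)]
  exact hm1

end Distribution

def binomGeomPMF (b q : ℝ) (k : ℕ) : ℝ :=
  if k = 0 then 1 - b else b * q ^ (k - 1) * (1 - q)

lemma binomGeomPMF_succ (b q : ℝ) (k : ℕ) : binomGeomPMF b q (k + 1) = b * q ^ k * (1 - q) := by
  simp [binomGeomPMF]

lemma binomGeomPMF_nonneg {b q : ℝ} (hb0 : 0 ≤ b) (hb1 : b ≤ 1) (hq0 : 0 ≤ q) (hq1 : q ≤ 1)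
    (k : ℕ) : 0 ≤ binomGeomPMF b q k := by
  unfold binomGeomPMF
  split
  · linarith
  · exact mul_nonneg (mul_nonneg hb0 (pow_nonneg hq0 _)) (by linarith)

/-- The terms `k ≥ 1` form a geometric series of ratio `(1 - b) / q * q = 1 - b`. -/
lemma hasSum_pow_mul_binomGeomPMF {b q : ℝ} (hb0 : 0 < b) (hb1 : b ≤ 1) (hq0 : q ≠ 0) :
    HasSum (fun k : ℕ => ((1 - b) / q) ^ k * binomGeomPMF b q k) ((1 - b) / q) := by
  have htail : HasSum (fun k : ℕ => ((1 - b) / q) ^ (k + 1) * binomGeomPMF b q (k + 1))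
      ((1 - b) / q * (1 - q)) := by
    have hterm : (fun k : ℕ => ((1 - b) / q) ^ (k + 1) * binomGeomPMF b q (k + 1))
        = fun k => (1 - b) / q * b * (1 - q) * (1 - b) ^ k := by
      funext k
      rw [binomGeomPMF_succ, pow_succ, div_pow]
      field_simp
    have hsum : (1 - b) / q * (1 - q) = (1 - b) / q * b * (1 - q) * (1 - (1 - b))⁻¹ := by
      rw [sub_sub_cancel]
      field_simp
    rw [hterm, hsum]
    exact (hasSum_geometric_of_lt_one (by linarith) (by linarith)).mul_left _
  have h := HasSum.zero_add (f := fun k : ℕ => ((1 - b) / q) ^ k * binomGeomPMF b q k) htail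
  have hsum : ((1 - b) / q) ^ 0 * binomGeomPMF b q 0 + (1 - b) / q * (1 - q) = (1 - b) / q := by
    simp only [binomGeomPMF, if_pos, pow_zero, one_mul]
    field_simp
    ring
  rwa [hsum] at h

lemma hasSum_mul_binomGeomPMF {b q : ℝ} (hq : |q| < 1) :
    HasSum (fun k : ℕ => (k : ℝ) * binomGeomPMF b q k) (b / (1 - q)) := by
  have hq1 : 1 - q ≠ 0 := (sub_pos.mpr (abs_lt.mp hq).2).ne'
  have htail :
      HasSum (fun k : ℕ => ((k + 1 : ℕ) : ℝ) * binomGeomPMF b q (k + 1)) (b / (1 - q)) := by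
    have hterm : (fun k : ℕ => ((k + 1 : ℕ) : ℝ) * binomGeomPMF b q (k + 1))
        = fun k : ℕ => b * (1 - q) * (k * q ^ k + q ^ k) := by
      funext k
      rw [binomGeomPMF_succ]
      push_cast
      ring
    have hsum : b / (1 - q) = b * (1 - q) * (q / (1 - q) ^ 2 + (1 - q)⁻¹) := by
      field_simp
      ring
    rw [hterm, hsum]
    exact ((hasSum_coe_mul_geometric_of_norm_lt_one hq).add
      (hasSum_geometric_of_abs_lt_one hq)).mul_left _
  simpa using HasSum.zero_add (f := fun k : ℕ => (k : ℝ) * binomGeomPMF b q k) htail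

/-- **Lemma 3 (Binomial/Geometric model).** With `P(Y_1 = 0) = 1 - b` and
`P(Y_1 = k) = b q^{k-1} (1-q)` for `k ≥ 1`, where `b ∈ (0,1]`, `q ∈ (0,1)` and `b + q > 1`,
the infinite-time dual ruin probability is `ψ*(u) = ((1-b)/q)^u`. -/
theorem binom_geom_dual_ruin
    (μ : Measure Ω) [IsProbabilityMeasure μ] (Y : ℕ → Ω → ℕ) (hY : IsIID μ Y)
    (b q : ℝ) (hb : b ∈ Set.Ioc (0 : ℝ) 1) (hq : q ∈ Set.Ioo (0 : ℝ) 1) (hnp : 1 < b + q)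
    (h0 : μ {ω | Y 0 ω = 0} = ENNReal.ofReal (1 - b))
    (hk : ∀ k : ℕ, 1 ≤ k → μ {ω | Y 0 ω = k} = ENNReal.ofReal (b * q ^ (k - 1) * (1 - q)))
    (u : ℕ) :
    dualRuinProb μ Y (u : ℤ) = ((1 - b) / q) ^ u := by
  obtain ⟨hb0, hb1⟩ := hb
  obtain ⟨hq0, hq1⟩ := hq
  have hρ0 : 0 ≤ (1 - b) / q := div_nonneg (by linarith) hq0.le
  have hρ1 : (1 - b) / q < 1 := (div_lt_one hq0).mpr (by linarith)
  have hpmf : ∀ k, μ {ω | Y 0 ω = k} = ENNReal.ofReal (binomGeomPMF b q k) := by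
    rintro (_ | k)
    · simpa [binomGeomPMF] using h0
    · simpa [binomGeomPMF] using hk (k + 1) k.succ_pos
  have hpmf0 := binomGeomPMF_nonneg hb0.le hb1 hq0.le hq1.le
  have hmgf : ∫⁻ ω, ENNReal.ofReal ((1 - b) / q) ^ Y 0 ω ∂μ = ENNReal.ofReal ((1 - b) / q) := by
    simp_rw [← ENNReal.ofReal_pow hρ0]
    exact lintegral_ofReal_comp_eq_of_hasSum (hY.1 0) hpmf hpmf0 (pow_nonneg hρ0)
      (hasSum_pow_mul_binomGeomPMF hb0 hb1 hq0.ne')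
  have hprofit : NetProfit μ Y := netProfit_of_hasSum (hY.1 0) hpmf hpmf0
    (hasSum_mul_binomGeomPMF (abs_lt.mpr ⟨by linarith, hq1⟩))
    ((one_lt_div (by linarith)).mpr (by linarith))
  rw [dualRuinProb_eq_pow hY hprofit (ENNReal.ofReal_lt_one.mpr hρ1) hmgf u,
    ← ENNReal.ofReal_pow hρ0, ENNReal.toReal_ofReal (pow_nonneg hρ0 u)]
end
end
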